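/- arXiv:2503.05121 — 2 statements merged into one kernel-verified Lean document; each statement's English description precedes it below -/
import Mathlib

section
/- Let $r\ge 3$ be an integer, $\varepsilon>0$ a sufficiently small constant, $\rho\ge 1$ a fixed integer, and set $d^*=\lceil\varepsilon^2\log n\rceil$ and $p_*=\log n/\binom{n-1}{r-1}$. Let $H_1,\dots,H_\rho$ be independent copies of $\vec H_{n,p'}$ where $p'=\frac{\varepsilon}{2r\rho}p_*$. Then there exists a constant $\varepsilon'=\varepsilon'(\varepsilon,r,\rho)>0$ such that, with probability tending to $1$ as $n\to\infty$, the number of vertices $v\in[n]$ whose out-degree is less than $d^*$ in at least one of $H_1,\dots,H_\rho$ is at most $n^{1-\varepsilon'}$. -/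
open MeasureTheory
open scoped Classical ENNReal

/-- An oriented edge of an `r`-uniform hypergraph on `Fin n`: an `r`-element subset of
`Fin n` together with a distinguished vertex (the tail) belonging to it. -/
abbrev OEdge (r n : ℕ) := {p : Fin n × Finset (Fin n) // p.2.card = r ∧ p.1 ∈ p.2}

/-- The Bernoulli measure on `Bool` with success probability `q`. -/
noncomputable def bern (q : ℝ≥0∞) : Measure Bool :=
  q • Measure.dirac true + (1 - q) • Measure.dirac false

/-- The out-degree of a vertex `v` in an oriented hypergraph (encoded by the indicator
function `f` of its set of oriented edges): the number of present oriented edges whose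
tail is `v`. -/
noncomputable def outDeg {r n : ℕ} (f : OEdge r n → Bool) (v : Fin n) : ℕ :=
  (Finset.univ.filter fun oe : OEdge r n => oe.1.1 = v ∧ f oe = true).card

open Finset

/-!
The out-degree of a vertex in one copy is a sum of `m = C(n-1, r-1)` independent Bernoulli(`q`)
variables. Markov's inequality applied to `2^{-outdeg}` gives
`P(outdeg < d) ≤ 2^d (1 - q/2)^m ≤ 2^d e^{-qm/2}`. Once `n > r` the truncation at `1` is inactive,
so `qm = a log n` with `a = ε/(2rρ)`, and with `d = ⌈ε² log n⌉` the bound is `2 n^{ε² - a/2}`.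
Summing over the `n` vertices and `ρ` copies, the expected number of bad vertices is at most
`2ρ n^{1 + ε² - a/2}`, and Markov's inequality with threshold `n^{1 - a/8}` bounds the failure
probability by `2ρ n^{-a/4}` as soon as `ε² ≤ a/8`, i.e. `ε ≤ 1/(16rρ)`.
-/

theorem lintegral_bern (q : ℝ≥0∞) (h : Bool → ℝ≥0∞) :
    ∫⁻ b, h b ∂bern q = q * h true + (1 - q) * h false := by
  simp only [bern, lintegral_add_measure, lintegral_smul_measure, lintegral_dirac, smul_eq_mul]

theorem isProbabilityMeasure_bern {q : ℝ≥0∞} (hq : q ≤ 1) : IsProbabilityMeasure (bern q) := by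
  constructor
  simp [bern, add_tsub_cancel_of_le hq]

theorem lintegral_inv_two_pow_card_filter {ι : Type*} [Fintype ι] {q : ℝ≥0∞} (hq : q ≤ 1)
    (T : Finset ι) :
    ∫⁻ g, 2⁻¹ ^ #(T.filter (g · = true)) ∂Measure.pi (fun _ : ι => bern q)
      = (q * 2⁻¹ + (1 - q)) ^ #T := by
  have := isProbabilityMeasure_bern hq
  let w : ι → Bool → ℝ≥0∞ := fun e b => if e ∈ T ∧ b = true then 2⁻¹ else 1
  have hprod : ∀ g : ι → Bool, 2⁻¹ ^ #(T.filter (g · = true)) = ∏ e, w e (g e) := by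
    intro g
    rw [prod_ite, prod_const_one, mul_one, prod_const]
    congr 2
    ext e
    simp
  simp_rw [hprod]
  rw [ProbabilityTheory.lintegral_prod_eq_prod_lintegral_of_indepFun _ _
    (ProbabilityTheory.iIndepFun_pi (X := w) fun _ => Measurable.of_discrete.aemeasurable)
    fun _ => Measurable.of_discrete]
  have heval : ∀ e, ∫⁻ g, w e (g e) ∂Measure.pi (fun _ : ι => bern q) =
      if e ∈ T then q * 2⁻¹ + (1 - q) else 1 := by
    intro e
    rw [(measurePreserving_eval (fun _ : ι => bern q) e).lintegral_comp Measurable.of_discrete,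
      lintegral_bern]
    by_cases he : e ∈ T <;> simp [w, he, add_tsub_cancel_of_le hq]
  simp_rw [heval]
  rw [prod_ite_mem, univ_inter, prod_const]

theorem measure_card_filter_lt_le {ι : Type*} [Fintype ι] {q : ℝ≥0∞} (hq : q ≤ 1)
    (T : Finset ι) (d : ℕ) :
    Measure.pi (fun _ : ι => bern q) {g | #(T.filter (g · = true)) < d}
      ≤ 2 ^ d * (q * 2⁻¹ + (1 - q)) ^ #T := by
  calc Measure.pi (fun _ : ι => bern q) {g | #(T.filter (g · = true)) < d}
      ≤ Measure.pi (fun _ : ι => bern q) {g | 2⁻¹ ^ d ≤ 2⁻¹ ^ #(T.filter (g · = true))} :=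
        measure_mono fun g hg => pow_le_pow_right_of_le_one' (by norm_num) (le_of_lt hg)
    _ ≤ (∫⁻ g, 2⁻¹ ^ #(T.filter (g · = true)) ∂Measure.pi (fun _ : ι => bern q)) / 2⁻¹ ^ d :=
        meas_ge_le_lintegral_div Measurable.of_discrete.aemeasurable (by simp) (by simp)
    _ = 2 ^ d * (q * 2⁻¹ + (1 - q)) ^ #T := by
        rw [lintegral_inv_two_pow_card_filter hq, div_eq_mul_inv, ENNReal.inv_pow, inv_inv,
          mul_comm]

theorem card_filter_tail_eq_choose {r n : ℕ} (hr : 1 ≤ r) (v : Fin n) :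
    #(univ.filter fun e : OEdge r n => e.1.1 = v) = (n - 1).choose (r - 1) := by
  have hcard : #(univ.erase v) = n - 1 := by simp [card_erase_of_mem]
  rw [← hcard, ← card_powersetCard]
  have hmem : ∀ E ∈ powersetCard (r - 1) (univ.erase v), v ∉ E := fun E hE hv =>
    (mem_erase.mp ((mem_powersetCard.mp hE).1 hv)).1 rfl
  refine card_bij' (fun e _ => e.1.2.erase v)
    (fun E hE => ⟨(v, insert v E), ?_, mem_insert_self v E⟩) ?_ ?_ ?_ ?_
  · rw [card_insert_of_notMem (hmem E hE), (mem_powersetCard.mp hE).2]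
    omega
  · intro e he
    obtain rfl : e.1.1 = v := (mem_filter.mp he).2
    rw [mem_powersetCard, card_erase_of_mem e.2.2, e.2.1]
    exact ⟨erase_subset_erase _ (subset_univ _), rfl⟩
  · intro E _
    simp
  · intro e he
    obtain rfl : e.1.1 = v := (mem_filter.mp he).2
    exact Subtype.ext (Prod.ext rfl (insert_erase e.2.2))
  · intro E hE
    exact erase_insert (hmem E hE)

theorem measure_outDeg_lt_le {r n : ℕ} (hr : 1 ≤ r) {q : ℝ≥0∞} (hq : q ≤ 1) (v : Fin n)
    (d : ℕ) :
    Measure.pi (fun _ : OEdge r n => bern q) {g | outDeg g v < d}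
      ≤ 2 ^ d * (q * 2⁻¹ + (1 - q)) ^ (n - 1).choose (r - 1) := by
  have h := measure_card_filter_lt_le hq (univ.filter fun e : OEdge r n => e.1.1 = v) d
  rw [card_filter_tail_eq_choose hr] at h
  simpa only [outDeg, filter_filter] using h

theorem measure_exists_eval_mem_le {ι α : Type*} [Fintype ι] [MeasurableSpace α]
    (ν : Measure α) [IsProbabilityMeasure ν] {A : Set α} (hA : MeasurableSet A) :
    Measure.pi (fun _ : ι => ν) {f | ∃ i, f i ∈ A} ≤ Fintype.card ι * ν A := by
  calc Measure.pi (fun _ : ι => ν) {f | ∃ i, f i ∈ A}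
      ≤ ∑ i, Measure.pi (fun _ : ι => ν) (Function.eval i ⁻¹' A) := by
        rw [Set.ofPred_exists]
        exact measure_iUnion_fintype_le _ _
    _ = Fintype.card ι * ν A := by
        simp [(measurePreserving_eval (fun _ : ι => ν) _).measure_preimage hA.nullMeasurableSet]

theorem lintegral_card_filter {ι α : Type*} [Fintype ι] [MeasurableSpace α]
    (μ : Measure α) (P : ι → α → Prop) [∀ x, DecidablePred (P · x)]
    (hP : ∀ i, MeasurableSet {x | P i x}) :
    ∫⁻ x, #(univ.filter (P · x)) ∂μ = ∑ i, μ {x | P i x} := by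
  have hsum : ∀ x, (#(univ.filter (P · x)) : ℝ≥0∞) = ∑ i, {x | P i x}.indicator 1 x := by
    intro x
    rw [card_filter]
    push_cast
    simp [Set.indicator_apply]
  simp_rw [hsum]
  rw [lintegral_finsetSum _ fun i _ => measurable_one.indicator (hP i)]
  simp_rw [lintegral_indicator_one (hP _)]

noncomputable def numLowOutDeg {r n ρ : ℕ} (d : ℕ) (f : Fin ρ → OEdge r n → Bool) : ℕ :=
  #(univ.filter fun v : Fin n => ∃ i, outDeg (f i) v < d)

theorem lintegral_numLowOutDeg_le {r n ρ : ℕ} (hr : 1 ≤ r) {q : ℝ≥0∞} (hq : q ≤ 1) (d : ℕ) :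
    ∫⁻ f, numLowOutDeg d f
        ∂Measure.pi (fun _ : Fin ρ => Measure.pi fun _ : OEdge r n => bern q)
      ≤ n * (ρ * (2 ^ d * (q * 2⁻¹ + (1 - q)) ^ (n - 1).choose (r - 1))) := by
  have := isProbabilityMeasure_bern hq
  simp only [numLowOutDeg]
  rw [lintegral_card_filter _ _ fun _ => MeasurableSet.of_discrete]
  calc ∑ v : Fin n, Measure.pi (fun _ : Fin ρ => Measure.pi fun _ : OEdge r n => bern q)
        {f | ∃ i, outDeg (f i) v < d}
      ≤ ∑ v : Fin n, (ρ * (2 ^ d * (q * 2⁻¹ + (1 - q)) ^ (n - 1).choose (r - 1))) := by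
        refine sum_le_sum fun v _ => ?_
        have h := measure_exists_eval_mem_le (ι := Fin ρ) (Measure.pi fun _ : OEdge r n => bern q)
          (MeasurableSet.of_discrete (s := {g | outDeg g v < d}))
        rw [Fintype.card_fin] at h
        exact h.trans (mul_le_mul_right (measure_outDeg_lt_le hr hq v d) _)
    _ = _ := by simp

theorem ofReal_mul_inv_two_add_one_sub_le_exp {x : ℝ} (hx0 : 0 ≤ x) (hx1 : x ≤ 1) :
    ENNReal.ofReal x * 2⁻¹ + (1 - ENNReal.ofReal x) ≤ ENNReal.ofReal (Real.exp (-(x / 2))) := by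
  have hhalf : (2 : ℝ≥0∞)⁻¹ = ENNReal.ofReal 2⁻¹ := by
    rw [ENNReal.ofReal_inv_of_pos two_pos, ENNReal.ofReal_ofNat]
  rw [← ENNReal.ofReal_one, ← ENNReal.ofReal_sub _ hx0, hhalf, ← ENNReal.ofReal_mul hx0,
    ← ENNReal.ofReal_add (by positivity) (by linarith)]
  refine ENNReal.ofReal_le_ofReal ?_
  linarith [Real.add_one_le_exp (-(x / 2))]

theorem measure_lt_numLowOutDeg_le {r n ρ : ℕ} (hr : 1 ≤ r) {x : ℝ} (hx0 : 0 ≤ x) (hx1 : x ≤ 1)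
    (d : ℕ) {K : ℝ} (hK : 0 < K) :
    Measure.pi (fun _ : Fin ρ => Measure.pi fun _ : OEdge r n => bern (ENNReal.ofReal x))
        {f | K < numLowOutDeg d f}
      ≤ ENNReal.ofReal (n * ρ * 2 ^ d * Real.exp (-(x / 2)) ^ (n - 1).choose (r - 1) / K) := by
  have hq : ENNReal.ofReal x ≤ 1 := ENNReal.ofReal_le_one.mpr hx1
  calc _ ≤ Measure.pi (fun _ : Fin ρ => Measure.pi fun _ : OEdge r n => bern (ENNReal.ofReal x))
        {f | ENNReal.ofReal K ≤ numLowOutDeg d f} := by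
        refine measure_mono fun f hf => ?_
        simpa using (ENNReal.ofReal_le_ofReal hf.le)
    _ ≤ (∫⁻ f, numLowOutDeg d f
        ∂Measure.pi (fun _ : Fin ρ => Measure.pi fun _ : OEdge r n => bern (ENNReal.ofReal x))) /
          ENNReal.ofReal K :=
        meas_ge_le_lintegral_div Measurable.of_discrete.aemeasurable (by simpa using hK)
          ENNReal.ofReal_ne_top
    _ ≤ ENNReal.ofReal (n * ρ * 2 ^ d * Real.exp (-(x / 2)) ^ (n - 1).choose (r - 1)) /
          ENNReal.ofReal K := by
        refine ENNReal.div_le_div_right ((lintegral_numLowOutDeg_le hr hq d).trans ?_) _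
        rw [ENNReal.ofReal_mul (by positivity), ENNReal.ofReal_mul (by positivity),
          ENNReal.ofReal_mul (by positivity), ENNReal.ofReal_pow (by positivity),
          ENNReal.ofReal_pow (by positivity)]
        simp only [ENNReal.ofReal_natCast, ENNReal.ofReal_ofNat, mul_assoc]
        gcongr
        exact ofReal_mul_inv_two_add_one_sub_le_exp hx0 hx1
    _ = _ := (ENNReal.ofReal_div_of_pos hK).symm

theorem Nat.le_choose_of_pos_of_lt {N k : ℕ} (hk : 0 < k) (hkN : k < N) : N ≤ N.choose k := by
  induction N, hkN using Nat.le_induction with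
  | base => simp
  | succ N hkN ih =>
    obtain ⟨j, rfl⟩ : ∃ j, k = j + 1 := ⟨k - 1, by omega⟩
    rw [Nat.choose_succ_succ']
    have := Nat.choose_pos (n := N) (k := j) (by omega)
    omega

theorem log_le_choose {r n : ℕ} (hr : 2 ≤ r) (hrn : r < n) :
    Real.log n ≤ (n - 1).choose (r - 1) := by
  have hn : (0 : ℝ) < n := by exact_mod_cast (by omega : 0 < n)
  calc Real.log n ≤ n - 1 := Real.log_le_sub_one_of_pos hn
    _ = ((n - 1 : ℕ) : ℝ) := by rw [Nat.cast_sub (by omega), Nat.cast_one]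
    _ ≤ _ := by exact_mod_cast Nat.le_choose_of_pos_of_lt (by omega) (by omega)

theorem two_pow_ceil_le_two_mul_exp {y : ℝ} (hy : 0 ≤ y) : (2 : ℝ) ^ ⌈y⌉₊ ≤ 2 * Real.exp y := by
  calc (2 : ℝ) ^ ⌈y⌉₊ = (2 : ℝ) ^ (⌈y⌉₊ : ℝ) := (Real.rpow_natCast 2 _).symm
    _ ≤ (2 : ℝ) ^ (y + 1) := Real.rpow_le_rpow_of_exponent_le one_le_two (Nat.ceil_lt_add_one hy).le
    _ = 2 * Real.exp (Real.log 2 * y) := by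
        rw [Real.rpow_add two_pos, Real.rpow_one, Real.rpow_def_of_pos two_pos, mul_comm]
    _ ≤ 2 * Real.exp y := by
        gcongr
        nlinarith [Real.log_two_lt_d9]

theorem measure_lt_numLowOutDeg_le_rpow {r n : ℕ} (ρ : ℕ) (hr : 2 ≤ r) (hrn : r < n) {a ε : ℝ}
    (ha0 : 0 < a) (ha1 : a ≤ 1) (hε : ε ^ 2 ≤ a / 8) :
    Measure.pi (fun _ : Fin ρ => Measure.pi fun _ : OEdge r n =>
        bern (ENNReal.ofReal (min (a * (Real.log n / ((n - 1).choose (r - 1)))) 1)))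
        {f | (n : ℝ) ^ (1 - a / 8) < numLowOutDeg ⌈ε ^ 2 * Real.log n⌉₊ f}
      ≤ ENNReal.ofReal (2 * ρ * (n : ℝ) ^ (-(a / 4))) := by
  set L := Real.log n
  set m := (n - 1).choose (r - 1)
  have hn : (0 : ℝ) < n := by exact_mod_cast (by omega : 0 < n)
  have hL : 0 ≤ L := Real.log_nonneg (by exact_mod_cast (by omega : 1 ≤ n))
  have hm : (0 : ℝ) < m := by exact_mod_cast Nat.choose_pos (by omega)
  have hLm : L ≤ m := log_le_choose hr hrn
  have hx1 : a * L / m ≤ 1 := by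
    rw [div_le_one hm]
    nlinarith
  rw [← mul_div_assoc, min_eq_left hx1]
  refine (measure_lt_numLowOutDeg_le (by omega) (by positivity) hx1 _ (by positivity)).trans
    (ENNReal.ofReal_le_ofReal ?_)
  have hexp : Real.exp (-(a * L / m / 2)) ^ m = Real.exp (-(a / 2) * L) := by
    rw [← Real.exp_nat_mul]; congr 1; field_simp
  have hrpow : ∀ s : ℝ, (n : ℝ) ^ s = Real.exp (s * L) := fun s => by
    rw [Real.rpow_def_of_pos hn, mul_comm]
  rw [hexp, hrpow, hrpow, div_le_iff₀ (Real.exp_pos _)]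
  have h2d := two_pow_ceil_le_two_mul_exp (by positivity : 0 ≤ ε ^ 2 * L)
  calc (n : ℝ) * ρ * 2 ^ ⌈ε ^ 2 * L⌉₊ * Real.exp (-(a / 2) * L)
      ≤ Real.exp L * ρ * (2 * Real.exp (ε ^ 2 * L)) * Real.exp (-(a / 2) * L) := by
        rw [Real.exp_log hn]; gcongr
    _ = 2 * ρ * Real.exp (L + ε ^ 2 * L + -(a / 2) * L) := by
        rw [Real.exp_add, Real.exp_add]; ring
    _ = 2 * ρ * Real.exp ((ε ^ 2 - 3 * a / 8) * L) * Real.exp ((1 - a / 8) * L) := by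
        rw [mul_assoc _ (Real.exp _), ← Real.exp_add]; ring_nf
    _ ≤ 2 * ρ * Real.exp (-(a / 4) * L) * Real.exp ((1 - a / 8) * L) := by
        gcongr; linarith

/-- Let `r ≥ 3`, let `ρ ≥ 1` be a fixed integer, and let `ε > 0` be a
sufficiently small constant.  Set `d* = ⌈ε² log n⌉` and `p* = log n / C(n-1, r-1)`, and
let `H_1, …, H_ρ` be independent copies of `⃗H_{n, p'}` with `p' = (ε/(2rρ)) p*`
(modelled by the product over `Fin ρ` of product Bernoulli measures on
`OEdge r n → Bool`; the probability is truncated at `1`, which only affects finitely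
many `n`).  Then there is a constant `ε' = ε'(ε,r,ρ) > 0` such that, with probability
tending to `1` as `n → ∞`, the number of vertices whose out-degree is less than `d*` in
at least one of `H_1, …, H_ρ` is at most `n^{1-ε'}`. -/
theorem stmt_5 (r : ℕ) (hr : 3 ≤ r) (ρ : ℕ) (hρ : 1 ≤ ρ) :
    ∃ ε₀ : ℝ, 0 < ε₀ ∧ ∀ ε : ℝ, 0 < ε → ε ≤ ε₀ →
      ∃ ε' : ℝ, 0 < ε' ∧
        Filter.Tendsto
          (fun n : ℕ =>
            (Measure.pi (fun _ : Fin ρ => Measure.pi (fun _ : OEdge r n =>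
                bern (ENNReal.ofReal
                  (min (ε / (2 * r * ρ) * (Real.log n / ((n - 1).choose (r - 1)))) 1)))))
              {f : Fin ρ → OEdge r n → Bool |
                ((Finset.univ.filter fun v : Fin n =>
                    ∃ i : Fin ρ, outDeg (f i) v < ⌈ε ^ 2 * Real.log n⌉₊).card : ℝ)
                  ≤ (n : ℝ) ^ ((1 : ℝ) - ε')})
          Filter.atTop (nhds 1) := by
  have hr1 : (1 : ℝ) ≤ r := by exact_mod_cast (by omega : 1 ≤ r)
  have hρ1 : (1 : ℝ) ≤ ρ := by exact_mod_cast hρ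
  refine ⟨1 / (16 * r * ρ), by positivity, fun ε hε hεle => ?_⟩
  set a := ε / (2 * r * ρ) with ha
  have ha0 : 0 < a := by positivity
  have ha1 : a ≤ 1 := by
    have hε1 : ε ≤ 1 := hεle.trans (by rw [div_le_one (by positivity)]; nlinarith)
    exact (div_le_self hε.le (by nlinarith)).trans hε1
  have hε2 : ε ^ 2 ≤ a / 8 := by
    calc ε ^ 2 = ε * ε := sq ε
      _ ≤ ε * (1 / (16 * r * ρ)) := by gcongr
      _ = a / 8 := by rw [ha]; field_simp; ring
  refine ⟨a / 8, by positivity, ?_⟩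
  have hsmall : Filter.Tendsto (fun n : ℕ => ENNReal.ofReal (2 * ρ * (n : ℝ) ^ (-(a / 4))))
      Filter.atTop (nhds 0) := by
    rw [← ENNReal.ofReal_zero, ← mul_zero (2 * (ρ : ℝ))]
    exact ENNReal.tendsto_ofReal (((tendsto_rpow_neg_atTop (by positivity)).comp
      tendsto_natCast_atTop_atTop).const_mul _)
  have hbad := tendsto_of_tendsto_of_tendsto_of_le_of_le' tendsto_const_nhds hsmall
    (Filter.Eventually.of_forall fun _ => zero_le)
    ((Filter.eventually_gt_atTop r).mono fun n hn =>
      measure_lt_numLowOutDeg_le_rpow ρ (by omega) hn ha0 ha1 hε2)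
  have hgood := ENNReal.Tendsto.sub tendsto_const_nhds hbad (Or.inl ENNReal.one_ne_top)
  rw [tsub_zero] at hgood
  refine hgood.congr fun n => ?_
  have := isProbabilityMeasure_bern (ENNReal.ofReal_le_one.mpr
    (min_le_right (a * (Real.log n / ((n - 1).choose (r - 1)))) 1))
  rw [← prob_compl_eq_one_sub MeasurableSet.of_discrete]
  congr 1
  ext f
  simp [numLowOutDeg]
end

section
/- Let $N,K,L$ be positive integers with $L\ge 2$ and let $0\le P\le 1/2$. Then the binomial distribution $\mathrm{Bin}(N,P)$ is stochastically dominated by $\mathrm{Bin}(LKN,P/K)$; that is, for every integer $k$, $\mathbb{P}(\mathrm{Bin}(N,P)\ge k)\le\mathbb{P}(\mathrm{Bin}(LKN,P/K)\ge k)$. -/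
/-!
Write `F_X(k) = ℙ(X < k)`. Stochastic dominance `F_Y ≤ F_X` of distributions on `ℕ` is preserved
by convolution: by Abel summation `∑ᵢ ℙ(X = i) F(k - i)` is monotone in the CDF of `X`, because
`i ↦ F(k - i)` is nonnegative and antitone. Since `Bin(n, p)` is the `n`-fold convolution of
`Bin(1, p)`, it is enough to compare one trial with `Bin(LK, P/K)`, i.e. to check
`(1 - P/K)^(LK) ≤ 1 - P`. By Bernoulli, `(1 - P/K)^K ≤ (1 + P/K)^(-K) ≤ 1/(1 + P)`, and
`(1 + P)^(-2) ≤ 1 - P` as long as `P + P² ≤ 1`.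
-/

open Finset

noncomputable def binomPMF (n : ℕ) (p : ℝ) (j : ℕ) : ℝ :=
  (n.choose j : ℝ) * p ^ j * (1 - p) ^ (n - j)

def PartialSumsLE (f g : ℕ → ℝ) : Prop :=
  ∀ k, ∑ i ∈ range k, f i ≤ ∑ i ∈ range k, g i

section Summation

theorem sum_range_mul_le_of_antitone {a b h : ℕ → ℝ} {k : ℕ}
    (hab : ∀ m ≤ k, ∑ i ∈ range m, a i ≤ ∑ i ∈ range m, b i)
    (hh : Antitone h) (hh0 : ∀ i, 0 ≤ h i) :
    ∑ i ∈ range k, a i * h i ≤ ∑ i ∈ range k, b i * h i := by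
  simp only [mul_comm _ (h _), ← smul_eq_mul, sum_range_by_parts h]
  refine sub_le_sub (smul_le_smul_of_nonneg_left (hab k le_rfl) (hh0 _))
    (sum_le_sum fun i hi => mul_le_mul_of_nonpos_left ?_ (sub_nonpos.2 (hh (Nat.le_succ i))))
  exact hab (i + 1) (by rw [mem_range] at hi; omega)

theorem sum_range_sum_antidiagonal_mul (f g : ℕ → ℝ) (k : ℕ) :
    ∑ j ∈ range k, ∑ x ∈ antidiagonal j, f x.1 * g x.2
      = ∑ i ∈ range k, f i * ∑ r ∈ range (k - i), g r := by
  simp only [Nat.sum_antidiagonal_eq_sum_range_succ (fun i r => f i * g r), Nat.succ_eq_add_one,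
    sum_range_diag_flip k (fun i r => f i * g r), mul_sum]

theorem PartialSumsLE.antidiagonal_mul {f f' g g' : ℕ → ℝ}
    (hf' : ∀ i, 0 ≤ f' i) (hg : ∀ i, 0 ≤ g i)
    (hf : PartialSumsLE f' f) (hgg : PartialSumsLE g' g) :
    PartialSumsLE (fun j => ∑ x ∈ antidiagonal j, f' x.1 * g' x.2)
      (fun j => ∑ x ∈ antidiagonal j, f x.1 * g x.2) := by
  intro k
  simp only [sum_range_sum_antidiagonal_mul]
  calc ∑ i ∈ range k, f' i * ∑ r ∈ range (k - i), g' r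
      ≤ ∑ i ∈ range k, f' i * ∑ r ∈ range (k - i), g r :=
        sum_le_sum fun i _ => mul_le_mul_of_nonneg_left (hgg _) (hf' i)
    _ ≤ ∑ i ∈ range k, f i * ∑ r ∈ range (k - i), g r :=
        sum_range_mul_le_of_antitone (fun m _ => hf m)
          (fun i j hij => sum_le_sum_of_subset_of_nonneg (range_subset_range.2 (by omega))
            fun r _ _ => hg r)
          (fun i => sum_nonneg fun r _ => hg r)

end Summation

section Binomial

variable {n : ℕ} {p : ℝ}

theorem binomPMF_nonneg (hp0 : 0 ≤ p) (hp1 : p ≤ 1) (j : ℕ) : 0 ≤ binomPMF n p j := by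
  have : 0 ≤ 1 - p := by linarith
  unfold binomPMF
  positivity

theorem binomPMF_eq_zero {j : ℕ} (h : n < j) : binomPMF n p j = 0 := by
  simp [binomPMF, Nat.choose_eq_zero_of_lt h]

theorem sum_range_binomPMF (n : ℕ) (p : ℝ) : ∑ j ∈ range (n + 1), binomPMF n p j = 1 := by
  have h := add_pow p (1 - p) n
  rw [add_sub_cancel, one_pow] at h
  rw [h]
  exact sum_congr rfl fun j _ => by rw [binomPMF]; ring

theorem sum_range_binomPMF_of_lt {k : ℕ} (h : n < k) : ∑ j ∈ range k, binomPMF n p j = 1 := by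
  rw [← sum_range_binomPMF n p]
  refine (sum_subset (range_subset_range.2 h) fun j _ hj => binomPMF_eq_zero ?_).symm
  simpa using hj

theorem sum_Ico_binomPMF (k : ℕ) :
    ∑ j ∈ Ico k (n + 1), binomPMF n p j = 1 - ∑ j ∈ range k, binomPMF n p j := by
  by_cases hk : k ≤ n + 1
  · rw [← sum_range_binomPMF n p, ← sum_range_add_sum_Ico _ hk]
    ring
  · rw [Ico_eq_empty (by omega), sum_range_binomPMF_of_lt (by omega)]
    simp

theorem sum_range_binomPMF_le_one (hp0 : 0 ≤ p) (hp1 : p ≤ 1) (k : ℕ) :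
    ∑ j ∈ range k, binomPMF n p j ≤ 1 := by
  have := sum_Ico_binomPMF (n := n) (p := p) k
  have := sum_nonneg fun j (_ : j ∈ Ico k (n + 1)) => binomPMF_nonneg (n := n) hp0 hp1 j
  linarith

theorem binomPMF_add (m n : ℕ) (p : ℝ) (j : ℕ) :
    binomPMF (m + n) p j = ∑ x ∈ antidiagonal j, binomPMF m p x.1 * binomPMF n p x.2 := by
  simp only [binomPMF, Nat.add_choose_eq, Nat.cast_sum, Nat.cast_mul, sum_mul]
  refine sum_congr rfl fun x hx => ?_
  rw [HasAntidiagonal.mem_antidiagonal] at hx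
  rcases le_or_gt x.1 m with h1 | h1
  · rcases le_or_gt x.2 n with h2 | h2
    · rw [← hx, show m + n - (x.1 + x.2) = (m - x.1) + (n - x.2) by omega]
      ring
    · simp [Nat.choose_eq_zero_of_lt h2]
  · simp [Nat.choose_eq_zero_of_lt h1]

theorem partialSumsLE_binomPMF_one {m : ℕ} {q : ℝ} (hq0 : 0 ≤ q) (hq1 : q ≤ 1)
    (h : (1 - q) ^ m ≤ 1 - p) : PartialSumsLE (binomPMF m q) (binomPMF 1 p) := by
  rintro (_ | _ | k)
  · simp
  · simpa [binomPMF] using h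
  · rw [sum_range_binomPMF_of_lt (n := 1) (by omega)]
    exact sum_range_binomPMF_le_one hq0 hq1 _

theorem partialSumsLE_binomPMF_mul {m : ℕ} {q : ℝ} (hq0 : 0 ≤ q) (hq1 : q ≤ 1)
    (hp0 : 0 ≤ p) (hp1 : p ≤ 1) (h : (1 - q) ^ m ≤ 1 - p) (n : ℕ) :
    PartialSumsLE (binomPMF (m * n) q) (binomPMF n p) := by
  induction n with
  | zero =>
    intro k
    refine le_of_eq (sum_congr rfl fun j _ => ?_)
    cases j <;> simp [binomPMF]
  | succ n ih =>
    simpa only [Nat.mul_succ, ← binomPMF_add] using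
      ih.antidiagonal_mul (binomPMF_nonneg hq0 hq1) (binomPMF_nonneg hp0 hp1)
        (partialSumsLE_binomPMF_one hq0 hq1 h)

end Binomial

theorem one_sub_pow_two_mul_le {a : ℝ} (n : ℕ) (ha0 : 0 ≤ a) (ha1 : a ≤ 1)
    (hna : n * a ≤ 1 / 2) : (1 - a) ^ (2 * n) ≤ 1 - n * a := by
  set t := (1 - a) ^ n
  have ht0 : 0 ≤ t := pow_nonneg (by linarith) n
  have hbernoulli : 1 + n * a ≤ (1 + a) ^ n := one_add_mul_le_pow (by linarith) n
  have ht : t * (1 + n * a) ≤ 1 :=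
    calc t * (1 + n * a) ≤ t * (1 + a) ^ n := mul_le_mul_of_nonneg_left hbernoulli ht0
      _ = (1 - a ^ 2) ^ n := by rw [← mul_pow]; ring
      _ ≤ 1 := pow_le_one₀ (by nlinarith) (by nlinarith)
  have hna0 : 0 ≤ (n : ℝ) * a := by positivity
  have ht2 : t ^ 2 * (1 + n * a) ^ 2 ≤ 1 := by
    rw [← mul_pow]; exact pow_le_one₀ (by positivity) ht
  have hcubic : 1 ≤ (1 + n * a) ^ 2 * (1 - n * a) := by
    nlinarith [mul_nonneg hna0 (show 0 ≤ 1 - n * a - (n * a) ^ 2 by nlinarith)]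
  rw [pow_mul']
  nlinarith [mul_le_mul_of_nonneg_left hcubic (sq_nonneg t)]

theorem stmt_8_general (N K L : ℕ) (hK : 0 < K) (hL : 2 ≤ L)
    (P : ℝ) (h0 : 0 ≤ P) (h1 : P ≤ 1 / 2) (k : ℕ) :
    ∑ j ∈ Finset.Ico k (N + 1), (N.choose j : ℝ) * P ^ j * (1 - P) ^ (N - j)
      ≤ ∑ j ∈ Finset.Ico k (L * K * N + 1),
          ((L * K * N).choose j : ℝ) * (P / K) ^ j * (1 - P / K) ^ (L * K * N - j) := by
  have hK1 : (1 : ℝ) ≤ K := by exact_mod_cast hK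
  have hq0 : 0 ≤ P / K := by positivity
  have hqP : P / K ≤ P := div_le_self h0 hK1
  have hKq : (K : ℝ) * (P / K) = P := by field_simp
  have hone_trial : (1 - P / K) ^ (L * K) ≤ 1 - P :=
    calc (1 - P / K) ^ (L * K) ≤ (1 - P / K) ^ (2 * K) :=
          pow_le_pow_of_le_one (by linarith) (by linarith) (Nat.mul_le_mul_right K hL)
      _ ≤ 1 - P := by
          simpa only [hKq] using one_sub_pow_two_mul_le K hq0 (by linarith) (by linarith)
  have hdom := partialSumsLE_binomPMF_mul hq0 (by linarith) h0 (by linarith) hone_trial N k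
  change ∑ j ∈ Ico k (N + 1), binomPMF N P j
    ≤ ∑ j ∈ Ico k (L * K * N + 1), binomPMF (L * K * N) (P / K) j
  rw [sum_Ico_binomPMF, sum_Ico_binomPMF]
  linarith

/-- Let `N, K, L` be positive integers with `L ≥ 2` and let
`0 ≤ P ≤ 1/2`.  Then `Bin(N, P)` is stochastically dominated by `Bin(LKN, P/K)`:
for every integer `k ≥ 0`,
`ℙ(Bin(N,P) ≥ k) ≤ ℙ(Bin(LKN, P/K) ≥ k)`,
where the upper tails are written out explicitly via the binomial distribution
`ℙ(Bin(n,p) = j) = C(n,j) p^j (1-p)^{n-j}`.  (For negative integers `k` both tails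
equal `1`, so the case `k = 0` already covers them.) -/
theorem stmt_8 (N K L : ℕ) (hN : 0 < N) (hK : 0 < K) (hL : 2 ≤ L)
    (P : ℝ) (h0 : 0 ≤ P) (h1 : P ≤ 1 / 2) (k : ℕ) :
    ∑ j ∈ Finset.Ico k (N + 1), (N.choose j : ℝ) * P ^ j * (1 - P) ^ (N - j)
      ≤ ∑ j ∈ Finset.Ico k (L * K * N + 1),
          ((L * K * N).choose j : ℝ) * (P / K) ^ j * (1 - P / K) ^ (L * K * N - j) :=
  stmt_8_general N K L hK hL P h0 h1 k
end
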